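/- arXiv:2603.25691 — 3 statements merged into one kernel-verified Lean document; each statement's English description precedes it below -/
import Mathlib

section
/- Let K ∈ ℝ^{n×n} satisfy K = U_K·D_K·U_Kᵀ with U_K ∈ ℝ^{n×n} orthogonal (U_Kᵀ·U_K = I_n) and D_K the diagonal matrix with diagonal entries d_K : [n] → ℝ, and let V ∈ ℝ^{r×r} satisfy V = U_V·D_V·U_Vᵀ with U_V ∈ ℝ^{r×r} orthogonal and D_V the diagonal matrix with diagonal entries d_V : [r] → ℝ. Let λ ∈ ℝ be such that d_V(j)·d_K(i) + λ ≠ 0 for all i ∈ [n], j ∈ [r]. Given B ∈ ℝ^{n×r}, define D ∈ ℝ^{n×r} by D(i,j) = (d_V(j)·d_K(i) + λ)⁻¹ and set W = U_K·((U_Kᵀ·B·U_V) ⊙ D)·U_Vᵀ. Then (V ⊗ K + λ·I_{rn})·vec(W) = vec(B). -/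
open Matrix
open scoped Kronecker

/-- Column-major vectorization of an `n × r` matrix, indexed by pairs `(j, i)`
with `vec W (j, i) = W i j`. -/
def vecCM {n r : ℕ} (W : Matrix (Fin n) (Fin r) ℝ) : Fin r × Fin n → ℝ :=
  fun p => W p.2 p.1

lemma kron_mulVec_vecCM {n r : ℕ} (A : Matrix (Fin r) (Fin r) ℝ)
    (Kk : Matrix (Fin n) (Fin n) ℝ) (X : Matrix (Fin n) (Fin r) ℝ) :
    (A ⊗ₖ Kk).mulVec (vecCM X) = vecCM (Kk * X * Aᵀ) := by
  funext p
  obtain ⟨j, i⟩ := p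
  simp only [vecCM, Matrix.mulVec, dotProduct, Matrix.kroneckerMap_apply,
    Matrix.mul_apply, Matrix.transpose_apply, Fintype.sum_prod_type,
    Finset.sum_mul, Finset.mul_sum]
  refine Finset.sum_congr rfl fun l _ => Finset.sum_congr rfl fun k _ => by ring

/-- the decoupled formula
`W = U_K ((U_Kᵀ B U_V) ⊙ D) U_Vᵀ` with `D(i,j) = (d_V(j) d_K(i) + λ)⁻¹` solves
`(V ⊗ K + λ I) vec(W) = vec(B)`. -/
theorem stmt_6 (n r : ℕ) (K UK : Matrix (Fin n) (Fin n) ℝ) (dK : Fin n → ℝ)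
    (hUK : UKᵀ * UK = 1) (hK : K = UK * Matrix.diagonal dK * UKᵀ)
    (V UV : Matrix (Fin r) (Fin r) ℝ) (dV : Fin r → ℝ)
    (hUV : UVᵀ * UV = 1) (hV : V = UV * Matrix.diagonal dV * UVᵀ)
    (lam : ℝ) (hlam : ∀ (i : Fin n) (j : Fin r), dV j * dK i + lam ≠ 0)
    (B : Matrix (Fin n) (Fin r) ℝ)
    (D : Matrix (Fin n) (Fin r) ℝ) (hD : ∀ i j, D i j = (dV j * dK i + lam)⁻¹)
    (W : Matrix (Fin n) (Fin r) ℝ)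
    (hW : W = UK * (Matrix.hadamard (UKᵀ * B * UV) D) * UVᵀ) :
    (V ⊗ₖ K + lam • (1 : Matrix (Fin r × Fin n) (Fin r × Fin n) ℝ)).mulVec (vecCM W) =
      vecCM B := by
  have hUK' : UK * UKᵀ = 1 := mul_eq_one_comm.mp hUK
  have hUV' : UV * UVᵀ = 1 := mul_eq_one_comm.mp hUV
  set M := UKᵀ * B * UV with hM
  -- key matrix identity
  have key : K * W * Vᵀ + lam • W = B := by
    have hVt : Vᵀ = UV * Matrix.diagonal dV * UVᵀ := by
      rw [hV]; simp [Matrix.transpose_mul, Matrix.mul_assoc]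
    have h1 : K * W * Vᵀ =
        UK * (Matrix.diagonal dK * (Matrix.hadamard M D) * Matrix.diagonal dV) * UVᵀ := by
      rw [hK, hW, hVt]
      simp only [Matrix.mul_assoc]
      rw [← Matrix.mul_assoc UKᵀ UK, hUK, Matrix.one_mul,
        ← Matrix.mul_assoc UVᵀ UV, hUV, Matrix.one_mul]
    have h2 : lam • W = UK * (lam • Matrix.hadamard M D) * UVᵀ := by
      rw [hW]
      simp [Matrix.mul_smul, Matrix.smul_mul]
    rw [h1, h2, ← Matrix.add_mul, ← Matrix.mul_add]
    have h3 : Matrix.diagonal dK * (Matrix.hadamard M D) * Matrix.diagonal dV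
        + lam • Matrix.hadamard M D = M := by
      ext i j
      simp only [Matrix.add_apply, Matrix.smul_apply, Matrix.mul_diagonal,
        Matrix.diagonal_mul, Matrix.hadamard_apply, smul_eq_mul, hD]
      rw [show dK i * (M i j * (dV j * dK i + lam)⁻¹) * dV j
          + lam * (M i j * (dV j * dK i + lam)⁻¹)
        = M i j * ((dV j * dK i + lam) * (dV j * dK i + lam)⁻¹) by ring,
        mul_inv_cancel₀ (hlam i j), mul_one]
    rw [h3, hM]
    calc UK * (UKᵀ * B * UV) * UVᵀ = (UK * UKᵀ) * B * (UV * UVᵀ) := by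
          simp [Matrix.mul_assoc]
      _ = B := by rw [hUK', hUV']; simp
  rw [Matrix.add_mulVec, kron_mulVec_vecCM]
  have hsm : (lam • (1 : Matrix (Fin r × Fin n) (Fin r × Fin n) ℝ)).mulVec (vecCM W)
      = vecCM (lam • W) := by
    funext p
    simp [Matrix.smul_mulVec, Matrix.one_mulVec, vecCM]
  rw [hsm]
  funext p
  have := congrArg (fun X => X p.2 p.1) key
  simpa [vecCM] using this
end

section
/- Let K ∈ ℝ^{n×n} be symmetric, let Z ∈ ℝ^{M×r}, let S ∈ ℝ^{Mn×q} be an arbitrary real matrix, let λ ∈ ℝ, and let W, B ∈ ℝ^{n×r}. If ((Z ⊗ I_n)ᵀ·S·Sᵀ·(Z ⊗ K) + λ·I_{rn})·vec(W) = vec(B), then ((Z ⊗ K)ᵀ·S·Sᵀ·(Z ⊗ K) + λ·(I_r ⊗ K))·vec(W) = (I_r ⊗ K)·vec(B). -/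
open Matrix
open scoped Kronecker

/-- a solution of the nonsymmetric system solves the symmetric system. -/
theorem stmt_13 (q M n r : ℕ) (K : Matrix (Fin n) (Fin n) ℝ) (hK : K.IsSymm)
    (Z : Matrix (Fin M) (Fin r) ℝ) (S : Matrix (Fin M × Fin n) (Fin q) ℝ) (lam : ℝ)
    (W B : Matrix (Fin n) (Fin r) ℝ)
    (h : ((Z ⊗ₖ (1 : Matrix (Fin n) (Fin n) ℝ))ᵀ * S * Sᵀ * (Z ⊗ₖ K) +
          lam • (1 : Matrix (Fin r × Fin n) (Fin r × Fin n) ℝ)).mulVec (vecCM W) =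
        vecCM B) :
    ((Z ⊗ₖ K)ᵀ * S * Sᵀ * (Z ⊗ₖ K) +
        lam • ((1 : Matrix (Fin r) (Fin r) ℝ) ⊗ₖ K)).mulVec (vecCM W) =
      ((1 : Matrix (Fin r) (Fin r) ℝ) ⊗ₖ K).mulVec (vecCM B) := by
  have h2 := congrArg (((1 : Matrix (Fin r) (Fin r) ℝ) ⊗ₖ K).mulVec) h
  rw [Matrix.mulVec_mulVec] at h2
  have key : ((1 : Matrix (Fin r) (Fin r) ℝ) ⊗ₖ K) *
      ((Z ⊗ₖ (1 : Matrix (Fin n) (Fin n) ℝ))ᵀ * S * Sᵀ * (Z ⊗ₖ K) +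
        lam • (1 : Matrix (Fin r × Fin n) (Fin r × Fin n) ℝ)) =
      (Z ⊗ₖ K)ᵀ * S * Sᵀ * (Z ⊗ₖ K) +
        lam • ((1 : Matrix (Fin r) (Fin r) ℝ) ⊗ₖ K) := by
    rw [Matrix.mul_add, Matrix.mul_smul, Matrix.mul_one]
    congr 1
    have : ((1 : Matrix (Fin r) (Fin r) ℝ) ⊗ₖ K) *
        (Z ⊗ₖ (1 : Matrix (Fin n) (Fin n) ℝ))ᵀ = (Z ⊗ₖ K)ᵀ := by
      rw [← Matrix.kroneckerMap_transpose, ← Matrix.kroneckerMap_transpose,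
        Matrix.transpose_one, ← Matrix.mul_kronecker_mul, Matrix.one_mul,
        Matrix.mul_one, hK]
    calc ((1 : Matrix (Fin r) (Fin r) ℝ) ⊗ₖ K) *
          ((Z ⊗ₖ (1 : Matrix (Fin n) (Fin n) ℝ))ᵀ * S * Sᵀ * (Z ⊗ₖ K))
        = (((1 : Matrix (Fin r) (Fin r) ℝ) ⊗ₖ K) *
            (Z ⊗ₖ (1 : Matrix (Fin n) (Fin n) ℝ))ᵀ) * S * Sᵀ * (Z ⊗ₖ K) := by
          simp only [Matrix.mul_assoc]
      _ = (Z ⊗ₖ K)ᵀ * S * Sᵀ * (Z ⊗ₖ K) := by rw [this]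
  rw [key] at h2
  exact h2
end

section
/- Let K ∈ ℝ^{n×n} satisfy K = U_K·D_K·U_Kᵀ with U_K ∈ ℝ^{n×n} orthogonal (U_Kᵀ·U_K = I_n) and D_K the diagonal matrix with diagonal entries d_K : [n] → ℝ, and let V ∈ ℝ^{r×r} satisfy V = U_V·D_V·U_Vᵀ with U_V ∈ ℝ^{r×r} orthogonal and D_V the diagonal matrix with diagonal entries d_V : [r] → ℝ. Let γ, λ, ρ ∈ ℝ be such that γ·d_V(j)·d_K(i)² + λ·d_K(i) + ρ ≠ 0 for all i ∈ [n], j ∈ [r]. Given X ∈ ℝ^{n×r}, define D ∈ ℝ^{n×r} by D(i,j) = (γ·d_V(j)·d_K(i)² + λ·d_K(i) + ρ)⁻¹ and set Y = U_K·((U_Kᵀ·X·U_V) ⊙ D)·U_Vᵀ. Then (γ·(V ⊗ K·K) + λ·(I_r ⊗ K) + ρ·I_{rn})·vec(Y) = vec(X). -/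
open Matrix
open scoped Kronecker

theorem vecCM_eq_vec {n r : ℕ} (W : Matrix (Fin n) (Fin r) ℝ) : vecCM W = vec W := rfl

section Preconditioner

variable {R l m n : Type*} [CommRing R] [Fintype m] [Fintype n]

theorem quadratic_kronecker_mulVec_vec [DecidableEq m] [DecidableEq n] (γ lam ρ : R)
    (K : Matrix m m R) (V : Matrix n n R) (Y : Matrix m n R) :
    (γ • (V ⊗ₖ (K * K)) + lam • ((1 : Matrix n n R) ⊗ₖ K) + ρ • (1 : Matrix (n × m) (n × m) R))
        *ᵥ vec Y =
      vec (γ • (K * K * Y * Vᵀ) + lam • (K * Y) + ρ • Y) := by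
  simp only [add_mulVec, smul_mulVec, one_mulVec, kronecker_mulVec_vec, transpose_one,
    Matrix.mul_one, vec_add, vec_smul]

theorem orthogonal_conj_diagonal_mul [DecidableEq m] {U : Matrix m m R} (hU : Uᵀ * U = 1)
    (d : m → R) (H : Matrix m n R) (W : Matrix n l R) :
    U * diagonal d * Uᵀ * (U * H * W) = U * (diagonal d * H) * W := by
  simp only [Matrix.mul_assoc]
  rw [← Matrix.mul_assoc Uᵀ, hU, Matrix.one_mul]

theorem mul_transpose_orthogonal_conj_diagonal [DecidableEq n] {W : Matrix n n R}
    (hW : Wᵀ * W = 1) (e : n → R) (U : Matrix l m R) (H : Matrix m n R) :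
    U * H * Wᵀ * (W * diagonal e * Wᵀ)ᵀ = U * (H * diagonal e) * Wᵀ := by
  simp only [transpose_mul, transpose_transpose, diagonal_transpose, Matrix.mul_assoc]
  rw [← Matrix.mul_assoc Wᵀ, hW, Matrix.one_mul]

theorem quadratic_sylvester_orthogonal_conj [DecidableEq m] [DecidableEq n]
    {K UK : Matrix m m R} {dK : m → R} (hUK : UKᵀ * UK = 1) (hK : K = UK * diagonal dK * UKᵀ)
    {V UV : Matrix n n R} {dV : n → R} (hUV : UVᵀ * UV = 1) (hV : V = UV * diagonal dV * UVᵀ)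
    (γ lam ρ : R) (H : Matrix m n R) :
    γ • (K * K * (UK * H * UVᵀ) * Vᵀ) + lam • (K * (UK * H * UVᵀ)) + ρ • (UK * H * UVᵀ) =
      UK * (of (fun i j => γ * dV j * dK i ^ 2 + lam * dK i + ρ) ⊙ H) * UVᵀ := by
  subst hK hV
  rw [Matrix.mul_assoc (UK * diagonal dK * UKᵀ), orthogonal_conj_diagonal_mul hUK,
    orthogonal_conj_diagonal_mul hUK, mul_transpose_orthogonal_conj_diagonal hUV]
  have hmultiplier : of (fun i j => γ * dV j * dK i ^ 2 + lam * dK i + ρ) ⊙ H =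
      γ • (diagonal dK * (diagonal dK * H) * diagonal dV) + lam • (diagonal dK * H) + ρ • H := by
    ext i j
    simp only [Matrix.add_apply, Matrix.smul_apply, diagonal_mul, mul_diagonal, hadamard_apply,
      of_apply, smul_eq_mul]
    ring
  rw [hmultiplier]
  simp only [Matrix.mul_add, Matrix.add_mul, Matrix.mul_smul, Matrix.smul_mul]

end Preconditioner

/-- the decoupled formula applies the inverse of the preconditioner:
`Y = U_K ((U_Kᵀ X U_V) ⊙ D) U_Vᵀ` with `D(i,j) = (γ d_V(j) d_K(i)² + λ d_K(i) + ρ)⁻¹`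
satisfies `(γ (V ⊗ K²) + λ (I_r ⊗ K) + ρ I) vec(Y) = vec(X)`. -/
theorem stmt_16 (n r : ℕ) (K UK : Matrix (Fin n) (Fin n) ℝ) (dK : Fin n → ℝ)
    (hUK : UKᵀ * UK = 1) (hK : K = UK * Matrix.diagonal dK * UKᵀ)
    (V UV : Matrix (Fin r) (Fin r) ℝ) (dV : Fin r → ℝ)
    (hUV : UVᵀ * UV = 1) (hV : V = UV * Matrix.diagonal dV * UVᵀ)
    (γ lam ρ : ℝ)
    (hpos : ∀ (i : Fin n) (j : Fin r), γ * dV j * dK i ^ 2 + lam * dK i + ρ ≠ 0)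
    (X : Matrix (Fin n) (Fin r) ℝ)
    (D : Matrix (Fin n) (Fin r) ℝ)
    (hD : ∀ i j, D i j = (γ * dV j * dK i ^ 2 + lam * dK i + ρ)⁻¹)
    (Y : Matrix (Fin n) (Fin r) ℝ)
    (hY : Y = UK * (Matrix.hadamard (UKᵀ * X * UV) D) * UVᵀ) :
    (γ • (V ⊗ₖ (K * K)) + lam • ((1 : Matrix (Fin r) (Fin r) ℝ) ⊗ₖ K) +
        ρ • (1 : Matrix (Fin r × Fin n) (Fin r × Fin n) ℝ)).mulVec (vecCM Y) =
      vecCM X := by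
  have hcancel : of (fun i j => γ * dV j * dK i ^ 2 + lam * dK i + ρ) ⊙ ((UKᵀ * X * UV) ⊙ D) =
      UKᵀ * X * UV := by
    ext i j
    rw [hadamard_apply, hadamard_apply, hD, of_apply, mul_left_comm, mul_inv_cancel₀ (hpos i j),
      mul_one]
  have hX : UK * (UKᵀ * X * UV) * UVᵀ = X := by
    rw [Matrix.mul_assoc, Matrix.mul_assoc, mul_eq_one_comm.mp hUV, Matrix.mul_one,
      ← Matrix.mul_assoc, mul_eq_one_comm.mp hUK, Matrix.one_mul]
  rw [vecCM_eq_vec, vecCM_eq_vec, quadratic_kronecker_mulVec_vec, hY,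
    quadratic_sylvester_orthogonal_conj hUK hK hUV hV, hcancel, hX]
end
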